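/- Fix an integer n ≥ 2, set b := -n + i, and let D = {0, m} with 2 ≤ m ≤ n². Let (α_j)_{j≥1} be a sequence with α_j ∈ {0, m, -m} for all j, set α := π((α_j)), and assume the radix expansion of α in base (b, {0, ±m}) is unique: for every sequence (β_j)_{j≥1} with β_j ∈ {0, m, -m} and π((β_j)) = α, one has β_j = α_j for all j. Let γ_j := min(D ∩ (D + α_j)) for each j, γ := π((γ_j)), and C(α) := C_{n,D} ∩ (C_{n,D} + α). Suppose (m − |α_j|)_{j≥1} is strongly eventually periodic with data p ≥ 1, integers a_1, …, a_p and nonnegative integers u_1, …, u_p, i.e., m − |α_ℓ| = a_ℓ for 1 ≤ ℓ ≤ p and m − |α_j| = a_ℓ + u_ℓ whenever j > p and j ≡ ℓ (mod p). Then C(α) = ⋃ f_{y,z}(C(α)), where the union is over all tuples (y_1, …, y_p) and (z_1, …, z_p) with y_ℓ, z_ℓ ∈ {0, m}, y_ℓ ≤ a_ℓ, and z_ℓ ≤ u_ℓ for each ℓ, and f_{y,z}(x) := b^{-p}(x + Σ_{ℓ=1}^p (y_ℓ b^{p−ℓ} + z_ℓ b^{−ℓ}) − γ) + γ. In particular,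 C(α) is self-similar. -/

import Mathlib

open Complex Filter Pointwise

/-- `piSum b d = ∑_{j≥1} d_j b^{-j}` (0-indexed: `d j` is the `(j+1)`-st digit). -/
noncomputable def piSum (b : ℂ) (d : ℕ → ℤ) : ℂ :=
  ∑' j : ℕ, (d j : ℂ) * b ^ (-((j : ℤ) + 1))

/-- The restricted digit set `C_{n,D}`. -/
def restrictedDigitSet (n : ℕ) (D : Set ℤ) : Set ℂ :=
  {z | ∃ d : ℕ → ℤ, (∀ j, d j ∈ D) ∧ z = piSum (-(n : ℂ) + Complex.I) d}

/-! If `π(d) = π(e) + π(α)` with all digits of `d, e` in `D = {0, m}`, then `d - e` has digits in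
`{0, ±m}`, so uniqueness forces `d - e = α`. Hence `C(α)` is the set of expansions with digits in
`D ∩ (D + α_j) = {γ_j} + {0, s_j}`, where `s_j = m - |α_j|`; that is, `C(α) = π(γ) + T` with `T` the
set of expansions with digits `d_j ∈ {0, s_j}`. Splitting off the first `p` digits of an element
of `T`, the remaining digits lie in `{0, s_{j+p}} = {0, s_j} + {0, v_j}`, where `v_j = u_j` for
`j < p` and `v_j = 0` afterwards. Hence `T` is the union of its images under
`x ↦ b^{-p} (x + ∑ (y_ℓ b^{p-ℓ-1} + z_ℓ b^{-ℓ-1}))`, and conjugating by the translation by `π(γ)`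
gives the maps `f_{y,z}`. -/

section piSum

variable {b : ℂ}

theorem one_lt_norm_neg_natCast_add_I {n : ℕ} (hn : 1 ≤ n) : 1 < ‖-(n : ℂ) + I‖ := by
  have hsq : ‖-(n : ℂ) + I‖ ^ 2 = (n : ℝ) ^ 2 + 1 := by
    simp [Complex.sq_norm, Complex.normSq_apply]
    ring
  have hn' : (1 : ℝ) ≤ n := by exact_mod_cast hn
  nlinarith [norm_nonneg (-(n : ℂ) + I)]

theorem summable_intCast_mul_zpow (hb : 1 < ‖b‖) {d : ℕ → ℤ} {M : ℤ} (hd : ∀ j, |d j| ≤ M) :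
    Summable fun j : ℕ => (d j : ℂ) * b ^ (-((j : ℤ) + 1)) := by
  have hr : ‖b⁻¹‖ < 1 := by rw [norm_inv]; exact inv_lt_one_of_one_lt₀ hb
  refine .of_norm_bounded ((summable_geometric_of_lt_one (norm_nonneg _) hr).mul_left (M : ℝ))
    fun j => ?_
  have hpow : b ^ (-((j : ℤ) + 1)) = b⁻¹ ^ (j + 1) := by
    rw [inv_pow, ← zpow_natCast, ← zpow_neg]; push_cast; rfl
  rw [hpow, norm_mul, norm_pow, Complex.norm_intCast, pow_succ]
  have hdM : |(d j : ℝ)| ≤ M := by exact_mod_cast hd j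
  exact mul_le_mul hdM (mul_le_of_le_one_right (by positivity) hr.le) (by positivity)
    ((abs_nonneg _).trans hdM)

theorem piSum_add (hb : 1 < ‖b‖) {d e : ℕ → ℤ} {M : ℤ} (hd : ∀ j, |d j| ≤ M)
    (he : ∀ j, |e j| ≤ M) : piSum b (fun j => d j + e j) = piSum b d + piSum b e := by
  rw [piSum, piSum, piSum, ← (summable_intCast_mul_zpow hb hd).tsum_add
    (summable_intCast_mul_zpow hb he)]
  push_cast
  simp only [add_mul]

theorem piSum_sub (hb : 1 < ‖b‖) {d e : ℕ → ℤ} {M : ℤ} (hd : ∀ j, |d j| ≤ M)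
    (he : ∀ j, |e j| ≤ M) : piSum b (fun j => d j - e j) = piSum b d - piSum b e := by
  rw [piSum, piSum, piSum, ← (summable_intCast_mul_zpow hb hd).tsum_sub
    (summable_intCast_mul_zpow hb he)]
  push_cast
  simp only [sub_mul]

theorem piSum_eq_sum_add_shift (hb : 1 < ‖b‖) {d : ℕ → ℤ} {M : ℤ} (hd : ∀ j, |d j| ≤ M)
    (p : ℕ) : piSum b d = ∑ ℓ : Fin p, (d ℓ : ℂ) * b ^ (-((ℓ : ℤ) + 1)) +
      b ^ (-(p : ℤ)) * piSum b (fun j => d (j + p)) := by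
  have hb0 : b ≠ 0 := norm_pos_iff.mp (one_pos.trans hb)
  rw [piSum, piSum, ← (summable_intCast_mul_zpow hb hd).sum_add_tsum_nat_add p,
    Fin.sum_univ_eq_sum_range (fun j => (d j : ℂ) * b ^ (-((j : ℤ) + 1))), ← tsum_mul_left]
  congr 2 with j
  rw [mul_left_comm, ← zpow_add₀ hb0]
  push_cast
  ring_nf

end piSum

theorem add_period_eq_of_periodic {s a u : ℕ → ℤ} {p : ℕ} (h₁ : ∀ ℓ < p, s ℓ = a ℓ)
    (h₂ : ∀ j, p ≤ j → s j = a (j % p) + u (j % p)) (j : ℕ) :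
    s (j + p) = s j + if j < p then u j else 0 := by
  rw [h₂ (j + p) (Nat.le_add_left p j), Nat.add_mod_right]
  split_ifs with hj
  · rw [Nat.mod_eq_of_lt hj, h₁ j hj]
  · rw [h₂ j (not_lt.mp hj), add_zero]

theorem pair_add_pair {s v : ℤ} (h : s = 0 ∨ v = 0) :
    ({0, s + v} : Set ℤ) = {0, s} + {0, v} := by
  ext d
  simp only [Set.mem_add, Set.mem_insert_iff, Set.mem_singleton_iff]
  constructor
  · rintro (rfl | rfl)
    · exact ⟨0, Or.inl rfl, 0, Or.inl rfl, rfl⟩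
    · rcases h with rfl | rfl
      · exact ⟨0, Or.inl rfl, v, Or.inr rfl, rfl⟩
      · exact ⟨s, Or.inr rfl, 0, Or.inl rfl, rfl⟩
  · rintro ⟨x, hx, y, hy, rfl⟩
    omega

theorem pair_inter_pair_add_eq {m t γ : ℤ} (hm : 0 < m) (ht : t ∈ ({0, m, -m} : Set ℤ))
    (hγ : IsLeast (({0, m} : Set ℤ) ∩ ({0, m} + {t})) γ) :
    ({0, m} : Set ℤ) ∩ ({0, m} + {t}) = {γ} + {0, m - |t|} := by
  have hmem : ∀ d, d ∈ ({0, m} : Set ℤ) ∩ ({0, m} + {t}) ↔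
      (d = 0 ∨ d = m) ∧ (d - t = 0 ∨ d - t = m) := by
    intro d
    simp only [Set.mem_inter_iff, Set.mem_insert_iff, Set.mem_singleton_iff, Set.add_singleton,
      Set.image_insert_eq, Set.image_singleton]
    omega
  obtain ⟨hγmem, hγle⟩ := hγ
  rw [hmem] at hγmem
  ext d
  rw [hmem]
  simp only [Set.singleton_add, Set.image_insert_eq, Set.image_singleton, Set.mem_insert_iff,
    Set.mem_singleton_iff]
  rcases ht with rfl | rfl | rfl
  · have := hγle ((hmem 0).mpr (by omega))
    simp only [abs_zero]
    omega
  · simp only [abs_of_pos hm]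
    omega
  · simp only [abs_neg, abs_of_pos hm]
    omega

def digitSet (b : ℂ) (S : ℕ → Set ℤ) : Set ℂ :=
  {z | ∃ d : ℕ → ℤ, (∀ j, d j ∈ S j) ∧ z = piSum b d}

section digitSet

variable {b : ℂ} {S T : ℕ → Set ℤ} {M : ℤ}

theorem restrictedDigitSet_eq_digitSet (n : ℕ) (D : Set ℤ) :
    restrictedDigitSet n D = digitSet (-(n : ℂ) + I) (fun _ => D) := rfl

theorem digitSet_singleton (γ : ℕ → ℤ) : digitSet b (fun j => {γ j}) = {piSum b γ} := by
  ext x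
  constructor
  · rintro ⟨d, hd, rfl⟩
    rw [funext hd]
    rfl
  · rintro rfl
    exact ⟨γ, fun j => rfl, rfl⟩

theorem digitSet_add (hb : 1 < ‖b‖) (hS : ∀ j, ∀ d ∈ S j, |d| ≤ M)
    (hT : ∀ j, ∀ d ∈ T j, |d| ≤ M) :
    digitSet b (fun j => S j + T j) = digitSet b S + digitSet b T := by
  ext x
  constructor
  · rintro ⟨c, hc, rfl⟩
    choose d hd e he hde using fun j => Set.mem_add.mp (hc j)
    refine ⟨piSum b d, ⟨d, hd, rfl⟩, piSum b e, ⟨e, he, rfl⟩, ?_⟩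
    rw [show c = fun j => d j + e j from funext fun j => (hde j).symm]
    exact (piSum_add hb (fun j => hS j _ (hd j)) (fun j => hT j _ (he j))).symm
  · rintro ⟨_, ⟨d, hd, rfl⟩, _, ⟨e, he, rfl⟩, rfl⟩
    exact ⟨fun j => d j + e j, fun j => Set.add_mem_add (hd j) (he j),
      (piSum_add hb (fun j => hS j _ (hd j)) (fun j => hT j _ (he j))).symm⟩

theorem digitSet_eq_iUnion_prefix (hb : 1 < ‖b‖) (hS : ∀ j, ∀ d ∈ S j, |d| ≤ M) (p : ℕ) :
    digitSet b S = ⋃ (y : Fin p → ℤ) (_ : ∀ ℓ : Fin p, y ℓ ∈ S ℓ),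
      (fun x => ∑ ℓ : Fin p, (y ℓ : ℂ) * b ^ (-((ℓ : ℤ) + 1)) + b ^ (-(p : ℤ)) * x) ''
        digitSet b (fun j => S (j + p)) := by
  ext x
  simp only [Set.mem_iUnion, Set.mem_image]
  constructor
  · rintro ⟨d, hd, rfl⟩
    exact ⟨fun ℓ => d ℓ, fun ℓ => hd ℓ, _, ⟨fun j => d (j + p), fun j => hd _, rfl⟩,
      (piSum_eq_sum_add_shift hb (fun j => hS j _ (hd j)) p).symm⟩
  · rintro ⟨y, hy, _, ⟨t, ht, rfl⟩, rfl⟩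
    let d : ℕ → ℤ := fun j => if h : j < p then y ⟨j, h⟩ else t (j - p)
    have hd : ∀ j, d j ∈ S j := by
      intro j
      by_cases h : j < p
      · simpa [d, h] using hy ⟨j, h⟩
      · simpa [d, h, Nat.sub_add_cancel (not_lt.mp h)] using ht (j - p)
    refine ⟨d, hd, ?_⟩
    rw [piSum_eq_sum_add_shift hb (fun j => hS j _ (hd j)) p]
    simp [d]

theorem digitSet_inter_add_eq (hb : 1 < ‖b‖) {D E : Set ℤ} (hD : ∀ d ∈ D, |d| ≤ M)
    (hE : ∀ d ∈ E, |d| ≤ M) (hDE : D - D ⊆ E) {α : ℕ → ℤ} (hα : ∀ j, α j ∈ E)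
    (huniq : ∀ β : ℕ → ℤ, (∀ j, β j ∈ E) → piSum b β = piSum b α → β = α) :
    digitSet b (fun _ => D) ∩ (digitSet b (fun _ => D) + {piSum b α}) =
      digitSet b (fun j => D ∩ (D + {α j})) := by
  ext x
  constructor
  · rintro ⟨⟨d, hd, rfl⟩, _, ⟨e, he, rfl⟩, _, rfl, hx⟩
    have hde : (fun j => d j - e j) = α :=
      huniq _ (fun j => hDE (Set.sub_mem_sub (hd j) (he j))) (by
        rw [piSum_sub hb (fun j => hD _ (hd j)) (fun j => hD _ (he j)), ← hx]
        ring)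
    refine ⟨d, fun j => ⟨hd j, e j, he j, α j, rfl, ?_⟩, rfl⟩
    rw [← congrFun hde j]
    ring
  · rintro ⟨d, hd, rfl⟩
    have hdα : ∀ j, d j - α j ∈ D := fun j => by
      obtain ⟨e, he, _, rfl, hed⟩ := (hd j).2
      rwa [← hed, add_sub_cancel_right]
    refine ⟨⟨d, fun j => (hd j).1, rfl⟩, _, ⟨_, hdα, rfl⟩, _, rfl, ?_⟩
    rw [piSum_sub hb (fun j => hD _ (hd j).1) (fun j => hE _ (hα j))]
    ring

theorem digitSet_pair_inter_add_eq (hb : 1 < ‖b‖) {m : ℤ} (hm : 0 < m) {α γ : ℕ → ℤ}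
    (hα : ∀ j, α j ∈ ({0, m, -m} : Set ℤ))
    (huniq : ∀ β : ℕ → ℤ, (∀ j, β j ∈ ({0, m, -m} : Set ℤ)) → piSum b β = piSum b α → β = α)
    (hγ : ∀ j, IsLeast (({0, m} : Set ℤ) ∩ (({0, m} : Set ℤ) + {α j})) (γ j)) :
    digitSet b (fun _ => {0, m}) ∩ (digitSet b (fun _ => {0, m}) + {piSum b α}) =
      {piSum b γ} + digitSet b (fun j => {0, m - |α j|}) := by
  have hE : ∀ d ∈ ({0, m, -m} : Set ℤ), |d| ≤ m := by
    rintro d (rfl | rfl | rfl) <;> simp [abs_of_pos hm, hm.le]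
  have hD : ∀ d ∈ ({0, m} : Set ℤ), |d| ≤ m := by
    rintro d (rfl | rfl) <;> simp [abs_of_pos hm, hm.le]
  have hDE : ({0, m} : Set ℤ) - {0, m} ⊆ {0, m, -m} := by
    rintro _ ⟨x, hx, y, hy, rfl⟩
    rcases hx with rfl | rfl <;> rcases hy with rfl | rfl <;> simp
  have hγD : ∀ j, ∀ d ∈ ({γ j} : Set ℤ), |d| ≤ m := by
    rintro j _ rfl
    exact hD _ (hγ j).1.1
  have hsD : ∀ j, ∀ d ∈ ({0, m - |α j|} : Set ℤ), |d| ≤ m := by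
    rintro j d (rfl | rfl)
    · simpa using hm.le
    · exact abs_le.mpr ⟨by linarith [hE _ (hα j)], by linarith [abs_nonneg (α j)]⟩
  rw [digitSet_inter_add_eq hb hD hE hDE hα huniq, ← digitSet_singleton γ,
    ← digitSet_add hb hγD hsD]
  congr 1 with j : 1
  exact pair_inter_pair_add_eq hm (hα j) (hγ j)

theorem digitSet_pair_eq_iUnion_image_self (hb : 1 < ‖b‖) {s v : ℕ → ℤ} {p : ℕ}
    (hs : ∀ j, |s j| ≤ M) (hshift : ∀ j, s (j + p) = s j + v j) (hsv : ∀ j, s j = 0 ∨ v j = 0)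
    (hv : ∀ j, p ≤ j → v j = 0) :
    digitSet b (fun j => {0, s j}) = ⋃ (y : Fin p → ℤ) (z : Fin p → ℤ)
      (_ : ∀ ℓ : Fin p, y ℓ ∈ ({0, s ℓ} : Set ℤ) ∧ z ℓ ∈ ({0, v ℓ} : Set ℤ)),
      (fun x => b ^ (-(p : ℤ)) * (x + ∑ ℓ : Fin p, ((y ℓ : ℂ) * b ^ ((p : ℤ) - ((ℓ : ℤ) + 1)) +
        (z ℓ : ℂ) * b ^ (-((ℓ : ℤ) + 1))))) '' digitSet b (fun j => {0, s j}) := by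
  have hb0 : b ≠ 0 := norm_pos_iff.mp (one_pos.trans hb)
  have hM : 0 ≤ M := (abs_nonneg _).trans (hs 0)
  have hsM : ∀ j, ∀ d ∈ ({0, s j} : Set ℤ), |d| ≤ M := by
    rintro j d (rfl | rfl)
    · simpa using hM
    · exact hs j
  have hvM : ∀ j, ∀ d ∈ ({0, v j} : Set ℤ), |d| ≤ M := by
    rintro j d (rfl | rfl)
    · simpa using hM
    · rcases hsv j with h | h
      · simpa [hshift, h] using hs (j + p)
      · simpa [h] using hM
  have htail : digitSet b (fun j => {0, s (j + p)}) =
      digitSet b (fun j => {0, s j}) + digitSet b (fun j => {0, v j}) := by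
    simp only [hshift, pair_add_pair (hsv _)]
    exact digitSet_add hb hsM hvM
  have hfinite : digitSet b (fun j => {0, v j}) = ⋃ (z : Fin p → ℤ)
      (_ : ∀ ℓ : Fin p, z ℓ ∈ ({0, v ℓ} : Set ℤ)),
        {∑ ℓ : Fin p, (z ℓ : ℂ) * b ^ (-((ℓ : ℤ) + 1))} := by
    have hzero : digitSet b (fun j => {0, v (j + p)}) = {0} := by
      simpa [hv _ (Nat.le_add_left p _), piSum] using digitSet_singleton (b := b) (fun _ => 0)
    simp [digitSet_eq_iUnion_prefix hb hvM p, hzero]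
  have hsum : ∀ (y z : Fin p → ℤ) (x : ℂ),
      ∑ ℓ : Fin p, (y ℓ : ℂ) * b ^ (-((ℓ : ℤ) + 1)) +
        b ^ (-(p : ℤ)) * (x + ∑ ℓ : Fin p, (z ℓ : ℂ) * b ^ (-((ℓ : ℤ) + 1))) =
      b ^ (-(p : ℤ)) * (x + ∑ ℓ : Fin p, ((y ℓ : ℂ) * b ^ ((p : ℤ) - ((ℓ : ℤ) + 1)) +
        (z ℓ : ℂ) * b ^ (-((ℓ : ℤ) + 1)))) := by
    intro y z x
    have hexp : ∀ k : ℤ, -(p : ℤ) + ((p : ℤ) - k) = -k := fun k => by ring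
    simp only [Finset.sum_add_distrib, mul_add, Finset.mul_sum, mul_left_comm _ (y _ : ℂ),
      ← zpow_add₀ hb0, hexp]
    ring
  conv_lhs => rw [digitSet_eq_iUnion_prefix hb hsM p, htail, hfinite]
  ext x
  simp only [Set.mem_iUnion, Set.mem_image, Set.mem_add, Set.mem_singleton_iff, exists_prop]
  constructor
  · rintro ⟨y, hy, _, ⟨t, ht, _, ⟨z, hz, rfl⟩, rfl⟩, rfl⟩
    exact ⟨y, z, fun ℓ => ⟨hy ℓ, hz ℓ⟩, t, ht, (hsum y z t).symm⟩
  · rintro ⟨y, z, hyz, t, ht, rfl⟩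
    exact ⟨y, fun ℓ => (hyz ℓ).1, _, ⟨t, ht, _, ⟨z, fun ℓ => (hyz ℓ).2, rfl⟩, rfl⟩, hsum y z t⟩

end digitSet

theorem stmt_17_general (n : ℕ) (hn : 2 ≤ n) (m : ℤ) (hm : 2 ≤ m ∧ m ≤ (n : ℤ) ^ 2)
    (α : ℕ → ℤ) (hα : ∀ j, α j ∈ ({0, m, -m} : Set ℤ))
    (huniq : ∀ β : ℕ → ℤ, (∀ j, β j ∈ ({0, m, -m} : Set ℤ)) →
      piSum (-(n : ℂ) + Complex.I) β = piSum (-(n : ℂ) + Complex.I) α →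
      ∀ j, β j = α j)
    (γ : ℕ → ℤ)
    (hγ : ∀ j, IsLeast (({0, m} : Set ℤ) ∩ (({0, m} : Set ℤ) + {α j})) (γ j))
    (Cα : Set ℂ)
    (hCα : Cα = restrictedDigitSet n {0, m} ∩
      (restrictedDigitSet n {0, m} + {piSum (-(n : ℂ) + Complex.I) α}))
    (p : ℕ) (a u : ℕ → ℤ) (hu : ∀ ℓ, 0 ≤ u ℓ)
    (hsep₁ : ∀ ℓ < p, m - |α ℓ| = a ℓ)
    (hsep₂ : ∀ j, p ≤ j → m - |α j| = a (j % p) + u (j % p)) :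
    Cα = ⋃ y : Fin p → ℤ, ⋃ z : Fin p → ℤ,
      ⋃ (_ : ∀ ℓ : Fin p, (y ℓ = 0 ∨ y ℓ = m) ∧ y ℓ ≤ a ℓ ∧
        (z ℓ = 0 ∨ z ℓ = m) ∧ z ℓ ≤ u ℓ),
      (fun x => (-(n : ℂ) + Complex.I) ^ (-(p : ℤ)) *
        (x + (∑ ℓ : Fin p, ((y ℓ : ℂ) * (-(n : ℂ) + Complex.I) ^ ((p : ℤ) - ((ℓ : ℤ) + 1)) +
          (z ℓ : ℂ) * (-(n : ℂ) + Complex.I) ^ (-((ℓ : ℤ) + 1)))) -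
          piSum (-(n : ℂ) + Complex.I) γ) +
        piSum (-(n : ℂ) + Complex.I) γ) '' Cα := by
  set b : ℂ := -(n : ℂ) + I
  have hb : 1 < ‖b‖ := one_lt_norm_neg_natCast_add_I (by omega)
  have hm0 : 0 < m := by omega
  have hs : ∀ j, m - |α j| = 0 ∨ m - |α j| = m := fun j => by
    obtain h | h | h : α j = 0 ∨ α j = m ∨ α j = -m := hα j <;> simp [h, abs_of_pos hm0]
  have hshift := add_period_eq_of_periodic (s := fun j => m - |α j|) hsep₁ hsep₂
  have hsv : ∀ j, m - |α j| = 0 ∨ (if j < p then u j else 0) = 0 := fun j => by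
    have := hshift j; have := hs j; have := hs (j + p); have := hu j
    split_ifs at * <;> omega
  have hC : Cα = (piSum b γ + ·) '' digitSet b (fun j => {0, m - |α j|}) := by
    rw [hCα, restrictedDigitSet_eq_digitSet, digitSet_pair_inter_add_eq hb hm0 hα
      (fun β hβ h => funext (huniq β hβ h)) hγ, Set.singleton_add]
  have hsm : ∀ j, |(m - |α j|)| ≤ m := fun j => by
    rcases hs j with h | h <;> simp [h, abs_of_pos hm0, hm0.le]
  rw [hC]
  conv_lhs => rw [digitSet_pair_eq_iUnion_image_self hb hsm hshift hsv
    fun j hj => if_neg (not_lt.mpr hj)]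
  simp only [Set.image_iUnion, Set.image_image]
  refine Set.iUnion_congr fun y => Set.iUnion_congr fun z =>
    Set.iUnion_congr_Prop (forall_congr' fun ℓ => ?_) fun _ => Set.image_congr fun x _ => by ring
  have := hs ℓ; have := hsep₁ ℓ ℓ.isLt; have := hshift ℓ; have := hs (ℓ + p); have := hu ℓ
  simp only [Set.mem_insert_iff, Set.mem_singleton_iff, if_pos ℓ.isLt] at *
  omega

theorem stmt_17 (n : ℕ) (hn : 2 ≤ n) (m : ℤ) (hm : 2 ≤ m ∧ m ≤ (n : ℤ) ^ 2)
    (α : ℕ → ℤ) (hα : ∀ j, α j ∈ ({0, m, -m} : Set ℤ))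
    (huniq : ∀ β : ℕ → ℤ, (∀ j, β j ∈ ({0, m, -m} : Set ℤ)) →
      piSum (-(n : ℂ) + Complex.I) β = piSum (-(n : ℂ) + Complex.I) α →
      ∀ j, β j = α j)
    (γ : ℕ → ℤ)
    (hγ : ∀ j, IsLeast (({0, m} : Set ℤ) ∩ (({0, m} : Set ℤ) + {α j})) (γ j))
    (Cα : Set ℂ)
    (hCα : Cα = restrictedDigitSet n {0, m} ∩
      (restrictedDigitSet n {0, m} + {piSum (-(n : ℂ) + Complex.I) α}))
    (p : ℕ) (hp : 1 ≤ p) (a u : ℕ → ℤ) (hu : ∀ ℓ, 0 ≤ u ℓ)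
    (hsep₁ : ∀ ℓ < p, m - |α ℓ| = a ℓ)
    (hsep₂ : ∀ j, p ≤ j → m - |α j| = a (j % p) + u (j % p)) :
    Cα = ⋃ y : Fin p → ℤ, ⋃ z : Fin p → ℤ,
      ⋃ (_ : ∀ ℓ : Fin p, (y ℓ = 0 ∨ y ℓ = m) ∧ y ℓ ≤ a ℓ ∧
        (z ℓ = 0 ∨ z ℓ = m) ∧ z ℓ ≤ u ℓ),
      (fun x => (-(n : ℂ) + Complex.I) ^ (-(p : ℤ)) *
        (x + (∑ ℓ : Fin p, ((y ℓ : ℂ) * (-(n : ℂ) + Complex.I) ^ ((p : ℤ) - ((ℓ : ℤ) + 1)) +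
          (z ℓ : ℂ) * (-(n : ℂ) + Complex.I) ^ (-((ℓ : ℤ) + 1)))) -
          piSum (-(n : ℂ) + Complex.I) γ) +
        piSum (-(n : ℂ) + Complex.I) γ) '' Cα :=
  stmt_17_general n hn m hm α hα huniq γ hγ Cα hCα p a u hu hsep₁ hsep₂
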